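/- On the crystal $B_{\ge0}$ with $\tilde e_1,\tilde f_1$ given by the $G_2$ one-row rules and $\varepsilon_1(b)=\bar x_1+(\bar x_3-\bar x_2+(x_2-x_3)_+)_+$, $\varphi_1(b)=x_1+(x_3-x_2+(\bar x_2-\bar x_3)_+)_+$, one has for all $b$ with $\tilde f_1 b\ne0$: $\varepsilon_1(\tilde f_1 b)=\varepsilon_1(b)+1$ and $\varphi_1(\tilde f_1 b)=\varphi_1(b)-1$. -/

import Mathlib

/-- An element `(x₁,x₂,x₃,x̄₃,x̄₂,x̄₁)` (fields `x1 x2 x3 y3 y2 y1`). -/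
structure C6 where
  x1 : ℤ
  x2 : ℤ
  x3 : ℤ
  y3 : ℤ
  y2 : ℤ
  y1 : ℤ
deriving DecidableEq

attribute [local instance] Classical.propDecidable

noncomputable section

/-- Membership in `B_{≥0}`: all coordinates nonnegative and `x₃ ≡ x̄₃ (mod 2)`. -/
def memB (b : C6) : Prop :=
  0 ≤ b.x1 ∧ 0 ≤ b.x2 ∧ 0 ≤ b.x3 ∧ 0 ≤ b.y3 ∧ 0 ≤ b.y2 ∧ 0 ≤ b.y1 ∧
    b.x3 % 2 = b.y3 % 2

/-- Return `some b` if all coordinates are nonnegative, else `none` (i.e. `0`). -/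
def chk (b : C6) : Option C6 :=
  if 0 ≤ b.x1 ∧ 0 ≤ b.x2 ∧ 0 ≤ b.x3 ∧ 0 ≤ b.y3 ∧ 0 ≤ b.y2 ∧ 0 ≤ b.y1 then some b
  else none

/-- The `G₂` one-row tableau operator `ẽ₁`. -/
def e1op (b : C6) : Option C6 :=
  if max (b.x2 - b.x3) 0 ≤ b.y2 - b.y3 then
    chk ⟨b.x1, b.x2, b.x3, b.y3, b.y2 + 1, b.y1 - 1⟩
  else if b.y2 - b.y3 < 0 ∧ 0 ≤ b.x3 - b.x2 then
    chk ⟨b.x1, b.x2, b.x3 + 1, b.y3 - 1, b.y2, b.y1⟩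
  else if max (b.y2 - b.y3) 0 < b.x2 - b.x3 then
    chk ⟨b.x1 + 1, b.x2 - 1, b.x3, b.y3, b.y2, b.y1⟩
  else none

/-- The `G₂` one-row tableau operator `f̃₁`. -/
def f1op (b : C6) : Option C6 :=
  if max (b.y2 - b.y3) 0 ≤ b.x2 - b.x3 then
    chk ⟨b.x1 - 1, b.x2 + 1, b.x3, b.y3, b.y2, b.y1⟩
  else if b.y2 - b.y3 ≤ 0 ∧ 0 < b.x3 - b.x2 then
    chk ⟨b.x1, b.x2, b.x3 - 1, b.y3 + 1, b.y2, b.y1⟩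
  else if max (b.x2 - b.x3) 0 < b.y2 - b.y3 then
    chk ⟨b.x1, b.x2, b.x3, b.y3, b.y2 - 1, b.y1 + 1⟩
  else none

def eps1 (b : C6) : ℤ := b.y1 + max (b.y3 - b.y2 + max (b.x2 - b.x3) 0) 0

def phi1 (b : C6) : ℤ := b.x1 + max (b.x3 - b.x2 + max (b.y2 - b.y3) 0) 0

/-- `f1op` before the nonnegativity check; its three branch conditions cover all of `ℤ⁶`. -/
def f1move (b : C6) : C6 :=
  if max (b.y2 - b.y3) 0 ≤ b.x2 - b.x3 then ⟨b.x1 - 1, b.x2 + 1, b.x3, b.y3, b.y2, b.y1⟩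
  else if b.y2 - b.y3 ≤ 0 ∧ 0 < b.x3 - b.x2 then ⟨b.x1, b.x2, b.x3 - 1, b.y3 + 1, b.y2, b.y1⟩
  else ⟨b.x1, b.x2, b.x3, b.y3, b.y2 - 1, b.y1 + 1⟩

theorem eq_of_chk_eq_some {c b : C6} (h : chk c = some b) : c = b := by
  unfold chk at h
  split_ifs at h
  exact Option.some.inj h

theorem f1op_eq_chk_f1move (b : C6) : f1op b = chk (f1move b) := by
  unfold f1op f1move
  split_ifs <;> first | rfl | omega

/- Each branch condition fixes the signs of all arguments of the maxima in `ε₁` and `φ₁`, both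
before and after the move, so on each branch `ε₁` and `φ₁` are affine and change by exactly `±1`. -/
theorem eps1_f1move (b : C6) : eps1 (f1move b) = eps1 b + 1 := by
  unfold f1move
  split_ifs <;> simp only [eps1] <;> omega

theorem phi1_f1move (b : C6) : phi1 (f1move b) = phi1 b - 1 := by
  unfold f1move
  split_ifs <;> simp only [phi1] <;> omega

theorem f1_eps1_phi1_general (b b' : C6) (hf : f1op b = some b') :
    eps1 b' = eps1 b + 1 ∧ phi1 b' = phi1 b - 1 := by
  obtain rfl := eq_of_chk_eq_some (f1op_eq_chk_f1move b ▸ hf)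
  exact ⟨eps1_f1move b, phi1_f1move b⟩

/-- On `B_{≥0}`, `f̃₁` increases `ε₁` by one and decreases `φ₁` by one. -/
theorem f1_eps1_phi1 (b b' : C6) (hb : memB b) (hf : f1op b = some b') :
    eps1 b' = eps1 b + 1 ∧ phi1 b' = phi1 b - 1 :=
  f1_eps1_phi1_general b b' hf

end
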